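/- Let F ⊆ ℕ, let A = ⋃_{i∈F} I(i), and let P_A be the canonical block projection of X = c0(⊕_{n=1}^∞ ℓ2^n) onto the coordinates in A. Let 0 < ε < 1 and let Y be a uniformly convex Banach space with modulus of convexity δ(ε). If T : X → Y is a bounded linear operator with ‖T‖ = 1 and ‖T∘P_A‖ > 1 − δ(ε), then ‖T∘(I − P_A)‖ ≤ ε. -/

import Mathlib

open Filter Topology

noncomputable section

/-- The Euclidean space `ℓ₂ⁿ⁺¹` forming the `n`-th block (so blocks have dimensions 1, 2, 3, …),
i.e. the block `I(n+1)` of the paper. -/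
abbrev E2 (n : ℕ) : Type := EuclideanSpace ℝ (Fin (n + 1))

/-- `c₀(⊕ₙ ℓ₂ⁿ)`: the subspace of the `ℓ∞`-sum of the spaces `ℓ₂ⁿ` consisting of those
elements whose block norms tend to `0`; it carries the norm `‖x‖ = sup_n ‖x n‖`. -/
def c0E2 : Submodule ℝ (lp E2 ⊤) where
  carrier := {x | Tendsto (fun n => ‖x n‖) atTop (𝓝 0)}
  add_mem' := by
    intro x y hx hy
    refine squeeze_zero (fun n => norm_nonneg _) (fun n => ?_) (by simpa using hx.add hy)
    rw [lp.coeFn_add]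
    exact norm_add_le _ _
  zero_mem' := by
    simp only [Set.mem_setOf_eq, lp.coeFn_zero, Pi.zero_apply, norm_zero]
    exact tendsto_const_nhds
  smul_mem' := by
    intro c x hx
    have h : ∀ n, ‖(c • x : lp E2 ⊤) n‖ = ‖c‖ * ‖x n‖ := by
      intro n; rw [lp.coeFn_smul]; simp [norm_smul]
    have := hx.const_mul ‖c‖
    simp only [mul_zero] at this
    exact Tendsto.congr (fun n => (h n).symm) this

/-- The standard unit basis vector of `c₀(⊕ₙ ℓ₂ⁿ)` sitting in block `j` at coordinate `i`. -/
def stdBasis (j : ℕ) (i : Fin (j + 1)) : c0E2 :=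
  ⟨lp.single ⊤ j (EuclideanSpace.single i 1), by
    refine Tendsto.congr' ?_ (tendsto_const_nhds : Tendsto (fun _ : ℕ => (0:ℝ)) atTop (𝓝 0))
    filter_upwards [eventually_gt_atTop j] with n hn
    rw [lp.single_apply_ne ⊤ j _ (by omega : n ≠ j), norm_zero]⟩

/-- The modulus of convexity of `Y`:
`δ(ε) = inf {1 - ‖(x + y)/2‖ : x, y ∈ B_Y, ‖x - y‖ ≥ ε}`. -/
def modulusOfConvexity (Y : Type*) [NormedAddCommGroup Y] (ε : ℝ) : ℝ :=
  sInf {d : ℝ | ∃ x y : Y, ‖x‖ ≤ 1 ∧ ‖y‖ ≤ 1 ∧ ε ≤ ‖x - y‖ ∧ d = 1 - ‖x + y‖ / 2}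

theorem modulusOfConvexity_le {Y : Type*} [NormedAddCommGroup Y] {ε : ℝ} {x y : Y} (hx : ‖x‖ ≤ 1) (hy : ‖y‖ ≤ 1)
    (hxy : ε ≤ ‖x - y‖) : modulusOfConvexity Y ε ≤ 1 - ‖x + y‖ / 2 := by
  refine csInf_le ⟨0, ?_⟩ ⟨x, y, hx, hy, hxy, rfl⟩
  rintro d ⟨x', y', hx', hy', -, rfl⟩
  linarith [norm_add_le x' y']

section RecombiningProjection

variable {X Y : Type*} [NormedAddCommGroup X] [NormedSpace ℝ X]
  [NormedAddCommGroup Y] [NormedSpace ℝ Y]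

/-- The vectors `P u ± (v - P v)` lie in the unit ball, and their images under `T` have midpoint
`T (P u)` and distance `2 ‖T (v - P v)‖`. -/
theorem norm_apply_le_one_sub_modulusOfConvexity {P : X →L[ℝ] X}
    (hP : ∀ u v, ‖P u + (v - P v)‖ ≤ max ‖u‖ ‖v‖) {T : X →L[ℝ] Y} (hT : ‖T‖ ≤ 1)
    {ε : ℝ} {u v : X} (hu : ‖u‖ ≤ 1) (hv : ‖v‖ ≤ 1) (hε : ε ≤ 2 * ‖T (v - P v)‖) :
    ‖T (P u)‖ ≤ 1 - modulusOfConvexity Y ε := by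
  set q := v - P v
  have h_ball : ∀ w : X, ‖w‖ ≤ 1 → ‖T w‖ ≤ 1 := fun w hw =>
    (T.le_opNorm w).trans (mul_le_one₀ hT (norm_nonneg w) hw)
  have h_plus : ‖T (P u + q)‖ ≤ 1 := h_ball _ ((hP u v).trans (max_le hu hv))
  have h_minus : ‖T (P u - q)‖ ≤ 1 := by
    have hq : P u - q = P u + (-v - P (-v)) := by simp only [q, map_neg]; abel
    exact h_ball _ (hq ▸ (hP u (-v)).trans (max_le hu (by rwa [norm_neg])))
  have h_sum : T (P u + q) + T (P u - q) = (2 : ℝ) • T (P u) := by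
    rw [← map_add, ← map_smul, two_smul, add_add_sub_cancel]
  have h_diff : T (P u + q) - T (P u - q) = (2 : ℝ) • T q := by
    rw [← map_sub, ← map_smul, two_smul, add_sub_sub_cancel]
  have h_sep : ε ≤ ‖T (P u + q) - T (P u - q)‖ := by
    rwa [h_diff, norm_smul, Real.norm_two]
  have := modulusOfConvexity_le h_plus h_minus h_sep
  rw [h_sum, norm_smul, Real.norm_two] at this
  linarith

theorem opNorm_comp_id_sub_le_of_lt_opNorm_comp {P : X →L[ℝ] X}
    (hP : ∀ u v, ‖P u + (v - P v)‖ ≤ max ‖u‖ ‖v‖) {T : X →L[ℝ] Y} (hT : ‖T‖ ≤ 1) {ε : ℝ}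
    (hTP : 1 - modulusOfConvexity Y ε < ‖T.comp P‖) :
    ‖T.comp (ContinuousLinearMap.id ℝ X - P)‖ ≤ ε := by
  by_contra! h
  obtain ⟨v, hv, hTv⟩ := (T.comp (ContinuousLinearMap.id ℝ X - P)).exists_lt_apply_of_lt_opNorm h
  obtain ⟨u, hu, hTu⟩ := (T.comp P).exists_lt_apply_of_lt_opNorm hTP
  have hε : ε ≤ 2 * ‖T (v - P v)‖ := by
    have : ε < ‖T (v - P v)‖ := hTv
    linarith [norm_nonneg (T (v - P v))]
  exact hTu.not_ge (norm_apply_le_one_sub_modulusOfConvexity hP hT hu.le hv.le hε)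

end RecombiningProjection

theorem norm_blockProjection_add_sub_le {F : Set ℕ} [DecidablePred (· ∈ F)]
    {P : c0E2 →L[ℝ] c0E2}
    (hP : ∀ (x : c0E2) (n : ℕ), ((P x : lp E2 ⊤) n) = if n ∈ F then (x : lp E2 ⊤) n else 0)
    (u v : c0E2) : ‖P u + (v - P v)‖ ≤ max ‖u‖ ‖v‖ := by
  have h_block : ∀ n, ‖((P u + (v - P v) : c0E2) : lp E2 ⊤) n‖ ≤ max ‖u‖ ‖v‖ := by
    intro n
    have hu := lp.norm_apply_le_norm ENNReal.top_ne_zero (u : lp E2 ⊤) n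
    have hv := lp.norm_apply_le_norm ENNReal.top_ne_zero (v : lp E2 ⊤) n
    have h_coord : ((P u + (v - P v) : c0E2) : lp E2 ⊤) n
        = (P u : lp E2 ⊤) n + ((v : lp E2 ⊤) n - (P v : lp E2 ⊤) n) := by
      simp
    rw [h_coord, hP, hP]
    split_ifs
    · rw [sub_self, add_zero]
      exact le_max_of_le_left hu
    · rw [sub_zero, zero_add]
      exact le_max_of_le_right hv
  exact lp.norm_le_of_forall_le (le_max_of_le_left (norm_nonneg u)) h_block

theorem stmt4_general (Y : Type*) [NormedAddCommGroup Y] [NormedSpace ℝ Y]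
    (F : Set ℕ) [DecidablePred (· ∈ F)] (P : c0E2 →L[ℝ] c0E2)
    (hP : ∀ (x : c0E2) (n : ℕ),
      ((P x : lp E2 ⊤) n) = if n ∈ F then (x : lp E2 ⊤) n else 0)
    (ε : ℝ)
    (T : c0E2 →L[ℝ] Y) (hT : ‖T‖ = 1)
    (hTP : 1 - modulusOfConvexity Y ε < ‖T.comp P‖) :
    ‖T.comp (ContinuousLinearMap.id ℝ c0E2 - P)‖ ≤ ε :=
  opNorm_comp_id_sub_le_of_lt_opNorm_comp (norm_blockProjection_add_sub_le hP) hT.le hTP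

/-- Lemma 4 of the paper. Let `F ⊆ ℕ` be a set of block indices and let `P`
be the canonical block projection of `c₀(⊕ₙ ℓ₂ⁿ)` onto the blocks in `F`. If `Y` is uniformly
convex with modulus of convexity `δ`, `0 < ε < 1`, and `T` is a norm-one operator with
`‖T ∘ P‖ > 1 - δ(ε)`, then `‖T ∘ (I - P)‖ ≤ ε`. -/
theorem stmt4 (Y : Type*) [NormedAddCommGroup Y] [NormedSpace ℝ Y]
    [UniformConvexSpace Y] [CompleteSpace Y]
    (F : Set ℕ) [DecidablePred (· ∈ F)] (P : c0E2 →L[ℝ] c0E2)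
    (hP : ∀ (x : c0E2) (n : ℕ),
      ((P x : lp E2 ⊤) n) = if n ∈ F then (x : lp E2 ⊤) n else 0)
    (ε : ℝ) (hε0 : 0 < ε) (hε1 : ε < 1)
    (T : c0E2 →L[ℝ] Y) (hT : ‖T‖ = 1)
    (hTP : 1 - modulusOfConvexity Y ε < ‖T.comp P‖) :
    ‖T.comp (ContinuousLinearMap.id ℝ c0E2 - P)‖ ≤ ε :=
  stmt4_general Y F P hP ε T hT hTP
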